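/- arXiv:1610.01922 — 3 statements merged into one kernel-verified Lean document; each statement's English description precedes it below -/
import Mathlib

section
/- Let (X,Y) be a random pair in ℝ^d × {0,1} with joint distribution μ, let η(x) = E[Y | X = x] be the regression function, and let 𝔅 be a class of measurable functions from ℝ^d to [0,1] that is totally bounded with respect to the supremum norm. Given i.i.d. samples (X_1,Y_1),…,(X_n,Y_n) from μ, let β_n ∈ 𝔅 be any minimizer over 𝔅 of the empirical squared error e_n(β) = (1/n) Σ_{i=1}^n (β(X_i) − Y_i)². Then almost surely E[(β_n(X) − Y)² | data] → inf_{β ∈ 𝔅} E[(β(X) − Y)²] as n → ∞; consequently, if inf_{β ∈ 𝔅} E[(β(X) − η(X))²] = 0, then the plug-in classification rule g_n(x) = 𝟙{β_n(x) > 1/2} is strongly consistent: its error probability L(g_n) = P(g_n(X) ≠ Y | data) converges almost surely to the Bayes risk L* = inf_g P(g(X) ≠ Y). -/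
/-!
Everything rests on a uniform strong law of large numbers over `𝔅`. On `[0, 1]` the squared loss
is `2`-Lipschitz in the prediction, so almost sure convergence of the empirical risk at the
points of countably many finite sup-norm nets of `𝔅` upgrades to uniform convergence on `𝔅`;
an exact minimiser of the empirical risk is then asymptotically a minimiser of the risk.

For classification, the pull-out property of `η = E[Y | X]` gives
`R(β) = ‖β - η‖²_{L²} + R(η)`. For `{0, 1}`-valued rules the `0-1` loss equals the squared loss,
and `𝟙{η > 1/2}` is pointwise the `{0, 1}`-value closest to `η`, so it is a Bayes rule, while the
excess error of `𝟙{β_n > 1/2}` is at most `2 ‖β_n - η‖_{L²} = 2 √(R(β_n) - R(η))`. This tends to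
zero because `inf_𝔅 R = R(η)` when `𝔅` approximates `η` in `L²`.
-/

open MeasureTheory ProbabilityTheory Filter Set Topology

noncomputable section

def empiricalSqRisk {α : Type*} (Z : ℕ → α × ℝ) (n : ℕ) (β : α → ℝ) : ℝ :=
  (1 / (n : ℝ)) * ∑ i ∈ Finset.range n, (β (Z i).1 - (Z i).2) ^ 2

def sqRisk {α : Type*} [MeasurableSpace α] (μ : Measure (α × ℝ)) (β : α → ℝ) : ℝ :=
  ∫ p, (β p.1 - p.2) ^ 2 ∂μ

def errorProb {α : Type*} [MeasurableSpace α] (μ : Measure (α × ℝ)) (g : α → ℝ) : ℝ :=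
  (μ {p | g p.1 ≠ p.2}).toReal

def plugInRule {α : Type*} (f : α → ℝ) : α → ℝ := fun x => if 1 / 2 < f x then 1 else 0

/-- `η(x) = E[Y | X = x]` for a pair `(X, Y)` with joint law `μ`. -/
def IsRegressionFunction {α : Type*} [MeasurableSpace α] (μ : Measure (α × ℝ)) (η : α → ℝ) :
    Prop :=
  Measurable η ∧ ∀ A : Set α, MeasurableSet A →
    ∫ p in Prod.fst ⁻¹' A, p.2 ∂μ = ∫ p in Prod.fst ⁻¹' A, η p.1 ∂μ

section Pointwise

theorem norm_sq_sub_le_one {a b : ℝ} (ha : a ∈ Icc (0 : ℝ) 1) (hb : b ∈ Icc (0 : ℝ) 1) :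
    ‖(a - b) ^ 2‖ ≤ 1 := by
  rw [norm_pow]
  exact pow_le_one₀ (norm_nonneg _) (abs_sub_le_of_nonneg_of_le ha.1 ha.2 hb.1 hb.2)

theorem abs_sub_sq_sub_sub_sq_le {a b y : ℝ} (ha : a ∈ Icc (0 : ℝ) 1) (hb : b ∈ Icc (0 : ℝ) 1)
    (hy : y ∈ Icc (0 : ℝ) 1) : |(a - y) ^ 2 - (b - y) ^ 2| ≤ 2 * |a - b| := by
  have hsum : |a + b - 2 * y| ≤ 2 :=
    abs_le.2 ⟨by linarith [ha.1, hb.1, hy.2], by linarith [ha.2, hb.2, hy.1]⟩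
  rw [show (a - y) ^ 2 - (b - y) ^ 2 = (a - b) * (a + b - 2 * y) by ring, abs_mul, mul_comm]
  exact mul_le_mul_of_nonneg_right hsum (abs_nonneg _)

theorem Measurable.plugInRule {α : Type*} [MeasurableSpace α] {f : α → ℝ} (hf : Measurable f) :
    Measurable (plugInRule f) :=
  Measurable.ite (measurableSet_lt measurable_const hf) measurable_const measurable_const

variable {α : Type*} (f η : α → ℝ) (x : α)

theorem plugInRule_eq_zero_or_one : plugInRule f x = 0 ∨ plugInRule f x = 1 := by
  unfold plugInRule; split_ifs <;> simp

theorem plugInRule_mem_Icc : plugInRule f x ∈ Icc (0 : ℝ) 1 := by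
  rcases plugInRule_eq_zero_or_one f x with h | h <;> simp [h]

theorem sq_plugInRule_sub_self_le {c : ℝ} (hc : c = 0 ∨ c = 1) :
    (plugInRule f x - f x) ^ 2 ≤ (c - f x) ^ 2 := by
  unfold plugInRule; split_ifs <;> rcases hc with rfl | rfl <;> nlinarith

theorem sq_plugInRule_sub_sub_sq_plugInRule_sub_le :
    (plugInRule f x - η x) ^ 2 - (plugInRule η x - η x) ^ 2 ≤ 2 * |f x - η x| := by
  unfold plugInRule
  split_ifs <;> nlinarith [le_abs_self (f x - η x), neg_abs_le (f x - η x)]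

end Pointwise

section UniformConvergence

variable {T : Type*} {S : Set T} {e : ℕ → T → ℝ} {R : T → ℝ}

theorem tendstoUniformlyOn_of_forall_finset_net
    (hnet : ∀ ε > 0, ∃ F : Finset T, (∀ γ ∈ F, Tendsto (e · γ) atTop (𝓝 (R γ))) ∧
      ∀ β ∈ S, ∃ γ ∈ F, (∀ n, |e n β - e n γ| ≤ ε) ∧ |R β - R γ| ≤ ε) :
    TendstoUniformlyOn e R atTop S := by
  refine Metric.tendstoUniformlyOn_iff.2 fun ε hε => ?_
  obtain ⟨F, hconv, hclose⟩ := hnet (ε / 4) (by positivity)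
  have hF : ∀ᶠ n in atTop, ∀ γ ∈ F, |e n γ - R γ| < ε / 4 :=
    (eventually_all_finset F).2 fun γ hγ =>
      (Metric.tendsto_nhds.1 (hconv γ hγ) (ε / 4) (by positivity)).mono fun n hn => by
        rwa [Real.dist_eq] at hn
  filter_upwards [hF] with n hn β hβ
  obtain ⟨γ, hγF, hen, hR⟩ := hclose β hβ
  have := hn γ hγF
  rw [Real.dist_eq, abs_sub_comm]
  calc |e n β - R β| ≤ |e n β - e n γ| + |e n γ - R γ| + |R β - R γ| := by
        have h1 := abs_sub_le (e n β) (e n γ) (R β)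
        have h2 := abs_sub_le (e n γ) (R γ) (R β)
        rw [abs_sub_comm (R γ)] at h2
        linarith
    _ < ε := by linarith [hen n]

theorem tendsto_iInf_of_tendstoUniformlyOn_of_isMinOn (hu : TendstoUniformlyOn e R atTop S)
    (hR : BddBelow (R '' S)) {x : ℕ → T} (hxS : ∀ n, x n ∈ S)
    (hmin : ∀ n, IsMinOn (e n) S (x n)) :
    Tendsto (fun n => R (x n)) atTop (𝓝 (⨅ β : S, R β)) := by
  rw [image_eq_range] at hR
  have : Nonempty S := ⟨⟨x 0, hxS 0⟩⟩
  refine Metric.tendsto_nhds.2 fun ε hε => ?_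
  filter_upwards [Metric.tendstoUniformlyOn_iff.1 hu (ε / 4) (by positivity)] with n hn
  have hlow : ⨅ β : S, R β ≤ R (x n) := ciInf_le hR ⟨x n, hxS n⟩
  have hup : R (x n) - ε / 2 ≤ ⨅ β : S, R β := le_ciInf fun β => by
    have h1 := hn (x n) (hxS n)
    have h2 := hn β β.2
    have h3 := isMinOn_iff.1 (hmin n) β β.2
    rw [Real.dist_eq, abs_lt] at h1 h2
    linarith
  rw [Real.dist_eq, abs_lt]
  constructor <;> linarith

end UniformConvergence

section Lipschitz

variable {α : Type*} {β γ : α → ℝ} {δ : ℝ}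

theorem abs_empiricalSqRisk_sub_le {Z : ℕ → α × ℝ} (hZ : ∀ i, (Z i).2 ∈ Icc (0 : ℝ) 1)
    (hβ : ∀ x, β x ∈ Icc (0 : ℝ) 1) (hγ : ∀ x, γ x ∈ Icc (0 : ℝ) 1)
    (hδ : ∀ x, |β x - γ x| ≤ δ) (n : ℕ) :
    |empiricalSqRisk Z n β - empiricalSqRisk Z n γ| ≤ 2 * δ := by
  rcases Nat.eq_zero_or_pos n with rfl | hn
  · simpa [empiricalSqRisk] using (abs_nonneg _).trans (hδ (Z 0).1)
  have hterm : ∀ i ∈ Finset.range n,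
      |(β (Z i).1 - (Z i).2) ^ 2 - (γ (Z i).1 - (Z i).2) ^ 2| ≤ 2 * δ := fun i _ =>
    (abs_sub_sq_sub_sub_sq_le (hβ _) (hγ _) (hZ i)).trans (by linarith [hδ (Z i).1])
  have hn' : (0 : ℝ) < n := Nat.cast_pos.2 hn
  rw [empiricalSqRisk, empiricalSqRisk, ← mul_sub, ← Finset.sum_sub_distrib, abs_mul,
    abs_of_pos (one_div_pos.2 hn'), one_div_mul_eq_div, div_le_iff₀ hn']
  calc |∑ i ∈ Finset.range n, ((β (Z i).1 - (Z i).2) ^ 2 - (γ (Z i).1 - (Z i).2) ^ 2)|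
      ≤ ∑ i ∈ Finset.range n, |(β (Z i).1 - (Z i).2) ^ 2 - (γ (Z i).1 - (Z i).2) ^ 2| :=
        Finset.abs_sum_le_sum_abs _ _
    _ ≤ ∑ _i ∈ Finset.range n, 2 * δ := Finset.sum_le_sum hterm
    _ = 2 * δ * n := by rw [Finset.sum_const, Finset.card_range, nsmul_eq_mul, mul_comm]

variable [MeasurableSpace α] {μ : Measure (α × ℝ)}

theorem integrable_sq_sub_snd [IsFiniteMeasure μ] (hY : ∀ᵐ p ∂μ, p.2 ∈ Icc (0 : ℝ) 1)
    (hβ : Measurable β) (hβ01 : ∀ x, β x ∈ Icc (0 : ℝ) 1) :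
    Integrable (fun p : α × ℝ => (β p.1 - p.2) ^ 2) μ :=
  Integrable.of_bound
    (((hβ.comp measurable_fst).sub measurable_snd).pow_const 2).aestronglyMeasurable 1
    (hY.mono fun p hp => norm_sq_sub_le_one (hβ01 p.1) hp)

theorem abs_sqRisk_sub_le [IsProbabilityMeasure μ] (hY : ∀ᵐ p ∂μ, p.2 ∈ Icc (0 : ℝ) 1)
    (hβ : Measurable β) (hβ01 : ∀ x, β x ∈ Icc (0 : ℝ) 1) (hγ : Measurable γ)
    (hγ01 : ∀ x, γ x ∈ Icc (0 : ℝ) 1) (hδ : ∀ x, |β x - γ x| ≤ δ) :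
    |sqRisk μ β - sqRisk μ γ| ≤ 2 * δ := by
  rw [sqRisk, sqRisk, ← integral_sub (integrable_sq_sub_snd hY hβ hβ01)
    (integrable_sq_sub_snd hY hγ hγ01)]
  calc |∫ p, ((β p.1 - p.2) ^ 2 - (γ p.1 - p.2) ^ 2) ∂μ|
      ≤ ∫ _ : α × ℝ, 2 * δ ∂μ := by
        rw [← Real.norm_eq_abs]
        refine norm_integral_le_of_norm_le (integrable_const (2 * δ)) (hY.mono fun p hp => ?_)
        exact (abs_sub_sq_sub_sub_sq_le (hβ01 _) (hγ01 _) hp).trans (by linarith [hδ p.1])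
    _ = 2 * δ := by simp

end Lipschitz

section StrongLaw

variable {Ω E : Type*} [MeasurableSpace Ω] [MeasurableSpace E] {P : Measure Ω}
  {Z : ℕ → Ω → E} {μ : Measure E}

theorem ae_of_map_eq {Z₀ : Ω → E} (hZ₀ : Measurable Z₀) (hμ : P.map Z₀ = μ) {s : Set E}
    (hs : MeasurableSet s) (h : ∀ ω, Z₀ ω ∈ s) : ∀ᵐ z ∂μ, z ∈ s := by
  subst hμ
  exact (ae_map_iff hZ₀.aemeasurable hs).2 (ae_of_all _ h)

theorem ae_tendsto_average_comp (hZ : ∀ n, Measurable (Z n)) (hind : iIndepFun Z P)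
    (hμ : ∀ n, P.map (Z n) = μ) {f : E → ℝ} (hf : Measurable f) (hfi : Integrable f μ) :
    ∀ᵐ ω ∂P, Tendsto (fun n : ℕ => (∑ i ∈ Finset.range n, f (Z i ω)) / n) atTop
      (𝓝 (∫ z, f z ∂μ)) := by
  have hident : ∀ i, IdentDistrib (f ∘ Z i) (f ∘ Z 0) P P := fun i =>
    IdentDistrib.comp ⟨(hZ i).aemeasurable, (hZ 0).aemeasurable, by rw [hμ i, hμ 0]⟩ hf
  have hint : Integrable (f ∘ Z 0) P := by
    rw [← hμ 0] at hfi
    exact hfi.comp_measurable (hZ 0)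
  have hmean : ∫ ω, f (Z 0 ω) ∂P = ∫ z, f z ∂μ := by
    rw [← hμ 0, integral_map (hZ 0).aemeasurable hf.aestronglyMeasurable]
  simpa only [Function.comp_apply, hmean] using strong_law_ae_real (fun i => f ∘ Z i) hint
    (fun i j hij => (hind.indepFun hij).comp hf hf) hident

variable {α : Type*} [MeasurableSpace α] {Z : ℕ → Ω → α × ℝ} {μ : Measure (α × ℝ)}

theorem ae_tendsto_empiricalSqRisk [IsFiniteMeasure μ] (hZ : ∀ n, Measurable (Z n))
    (hind : iIndepFun Z P) (hμ : ∀ n, P.map (Z n) = μ) (hY : ∀ᵐ p ∂μ, p.2 ∈ Icc (0 : ℝ) 1)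
    {β : α → ℝ} (hβ : Measurable β) (hβ01 : ∀ x, β x ∈ Icc (0 : ℝ) 1) :
    ∀ᵐ ω ∂P, Tendsto (fun n => empiricalSqRisk (Z · ω) n β) atTop (𝓝 (sqRisk μ β)) := by
  have hloss : Measurable fun p : α × ℝ => (β p.1 - p.2) ^ 2 := by fun_prop
  filter_upwards [ae_tendsto_average_comp hZ hind hμ hloss
    (integrable_sq_sub_snd hY hβ hβ01)] with ω hω
  simpa only [empiricalSqRisk, sqRisk, one_div_mul_eq_div] using hω

theorem ae_tendstoUniformlyOn_empiricalSqRisk [IsProbabilityMeasure μ]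
    (hZ : ∀ n, Measurable (Z n)) (hind : iIndepFun Z P) (hμ : ∀ n, P.map (Z n) = μ)
    (hY : ∀ n ω, (Z n ω).2 ∈ Icc (0 : ℝ) 1) {𝔅 : Set (α → ℝ)} (h𝔅meas : ∀ β ∈ 𝔅, Measurable β)
    (h𝔅01 : ∀ β ∈ 𝔅, ∀ x, β x ∈ Icc (0 : ℝ) 1)
    (h𝔅tb : ∀ ε > (0 : ℝ), ∃ F : Finset (α → ℝ), ↑F ⊆ 𝔅 ∧
      ∀ β ∈ 𝔅, ∃ γ ∈ F, ∀ x, |β x - γ x| ≤ ε) :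
    ∀ᵐ ω ∂P, TendstoUniformlyOn (fun n β => empiricalSqRisk (Z · ω) n β) (sqRisk μ) atTop 𝔅 := by
  have hYμ : ∀ᵐ p ∂μ, p.2 ∈ Icc (0 : ℝ) 1 :=
    ae_of_map_eq (hZ 0) (hμ 0) (measurable_snd measurableSet_Icc) (hY 0)
  choose F hF𝔅 hFnet using fun k : ℕ => h𝔅tb (1 / (k + 1)) Nat.one_div_pos_of_nat
  have hnets : ∀ᵐ ω ∂P, ∀ k, ∀ γ ∈ F k,
      Tendsto (fun n => empiricalSqRisk (Z · ω) n γ) atTop (𝓝 (sqRisk μ γ)) :=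
    ae_all_iff.2 fun k => (eventually_all_finset _).2 fun γ hγ =>
      ae_tendsto_empiricalSqRisk hZ hind hμ hYμ (h𝔅meas γ (hF𝔅 k hγ)) (h𝔅01 γ (hF𝔅 k hγ))
  filter_upwards [hnets] with ω hω
  refine tendstoUniformlyOn_of_forall_finset_net fun ε hε => ?_
  obtain ⟨k, hk⟩ := exists_nat_one_div_lt (half_pos hε)
  refine ⟨F k, hω k, fun β hβ => ?_⟩
  obtain ⟨γ, hγ, hβγ⟩ := hFnet k β hβ
  have hγ𝔅 := hF𝔅 k hγ
  refine ⟨γ, hγ, fun n => ?_, ?_⟩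
  · exact (abs_empiricalSqRisk_sub_le (fun i => hY i ω) (h𝔅01 β hβ) (h𝔅01 γ hγ𝔅) hβγ n).trans
      (by linarith)
  · exact (abs_sqRisk_sub_le hYμ (h𝔅meas β hβ) (h𝔅01 β hβ) (h𝔅meas γ hγ𝔅) (h𝔅01 γ hγ𝔅)
      hβγ).trans (by linarith)

end StrongLaw

/-- `f` is integrable on each set `{|f| ≤ M}`, and these sets exhaust the space. -/
theorem ae_nonneg_of_forall_setIntegral_nonneg_of_measurable {β : Type*} [MeasurableSpace β]
    {ν : Measure β} [IsFiniteMeasure ν] {f : β → ℝ} (hf : Measurable f)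
    (h : ∀ s, MeasurableSet s → IntegrableOn f s ν → 0 ≤ ∫ x in s, f x ∂ν) : 0 ≤ᵐ[ν] f := by
  set t : ℕ → Set β := fun M => {x | |f x| ≤ M}
  have ht : ∀ M, MeasurableSet (t M) := fun M => measurableSet_le hf.abs measurable_const
  have hcover : ⋃ M, t M = univ := eq_univ_of_forall fun x => mem_iUnion.2 (exists_nat_ge |f x|)
  rw [EventuallyLE, ← Measure.restrict_univ (μ := ν), ← hcover, ae_restrict_iUnion_iff]
  intro M
  have hint : IntegrableOn f (t M) ν :=
    Measure.integrableOn_of_bounded (measure_ne_top _ _) hf.aestronglyMeasurable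
      ((ae_restrict_mem (ht M)).mono fun x hx => hx)
  exact ae_nonneg_restrict_of_forall_setIntegral_nonneg_inter hint fun s hs _ =>
    h _ (hs.inter (ht M)) (hint.mono_set inter_subset_right)

theorem ae_snd_mem_Icc {α : Type*} [MeasurableSpace α] {μ : Measure (α × ℝ)}
    (hY : ∀ᵐ p ∂μ, p.2 = 0 ∨ p.2 = 1) : ∀ᵐ p ∂μ, p.2 ∈ Icc (0 : ℝ) 1 :=
  hY.mono fun p hp => by rcases hp with h | h <;> simp [h]

theorem errorProb_eq_sqRisk {α : Type*} [MeasurableSpace α] {μ : Measure (α × ℝ)}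
    (hY : ∀ᵐ p ∂μ, p.2 = 0 ∨ p.2 = 1) {g : α → ℝ} (hg : Measurable g)
    (hg01 : ∀ x, g x = 0 ∨ g x = 1) : errorProb μ g = sqRisk μ g := by
  have hs : MeasurableSet {p : α × ℝ | g p.1 ≠ p.2} :=
    (measurableSet_eq_fun (hg.comp measurable_fst) measurable_snd).compl
  rw [errorProb, ← measureReal_def, ← integral_indicator_one hs, sqRisk]
  refine integral_congr_ae (hY.mono fun p hp => ?_)
  rcases hp with h | h <;> rcases hg01 p.1 with h' | h' <;> simp [indicator, h, h']

theorem integral_abs_le_sqrt_integral_sq {Ω : Type*} [MeasurableSpace Ω] {μ : Measure Ω}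
    [IsProbabilityMeasure μ] {f : Ω → ℝ} (hf : MemLp f 2 μ) :
    ∫ x, |f x| ∂μ ≤ √(∫ x, f x ^ 2 ∂μ) := by
  have hvar := variance_nonneg |f| μ
  rw [variance_eq_sub hf.abs] at hvar
  refine (le_abs_self _).trans (Real.abs_le_sqrt ?_)
  simpa [sq_abs] using hvar

namespace IsRegressionFunction

variable {α : Type*} [MeasurableSpace α] {μ : Measure (α × ℝ)} {η : α → ℝ}

theorem ae_mem_Icc [IsFiniteMeasure μ] (hη : IsRegressionFunction μ η)
    (hY : ∀ᵐ p ∂μ, p.2 ∈ Icc (0 : ℝ) 1) : ∀ᵐ p ∂μ, η p.1 ∈ Icc (0 : ℝ) 1 := by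
  set ν := μ.map Prod.fst
  have hν : ∀ s, MeasurableSet s → ∫ x in s, η x ∂ν = ∫ p in Prod.fst ⁻¹' s, p.2 ∂μ :=
    fun s hs => (setIntegral_map hs hη.1.aestronglyMeasurable measurable_fst.aemeasurable).trans
      (hη.2 s hs).symm
  have hlow : 0 ≤ᵐ[ν] η := ae_nonneg_of_forall_setIntegral_nonneg_of_measurable hη.1
    fun s hs _ => by
      rw [hν s hs]
      exact setIntegral_nonneg_of_ae_restrict (ae_restrict_of_ae (hY.mono fun p hp => hp.1))
  have hup : 0 ≤ᵐ[ν] fun x => 1 - η x :=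
    ae_nonneg_of_forall_setIntegral_nonneg_of_measurable (measurable_const.sub hη.1)
      fun s hs hint => by
        have hone : IntegrableOn (fun _ => (1 : ℝ)) s ν := integrableOn_const (measure_ne_top _ _)
        have hηs : IntegrableOn η s ν := (hone.sub hint).congr_fun (fun x _ => by simp) hs
        have hsnd : ∫ p in Prod.fst ⁻¹' s, p.2 ∂μ ≤ 1 * μ.real (Prod.fst ⁻¹' s) :=
          (Real.le_norm_self _).trans (norm_setIntegral_le_of_norm_le_const_ae (measure_lt_top _ _)
            (ae_restrict_of_ae (hY.mono fun p hp => (abs_of_nonneg hp.1).trans_le hp.2)))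
        rw [integral_sub hone hηs, hν s hs, setIntegral_const, smul_eq_mul, mul_one, sub_nonneg,
          map_measureReal_apply measurable_fst hs]
        linarith
  filter_upwards [ae_of_ae_map measurable_fst.aemeasurable (hlow.and hup)] with p hp
  exact ⟨hp.1, sub_nonneg.1 hp.2⟩

/-- `η ∘ Prod.fst` is a version of `μ[Prod.snd | σ(Prod.fst)]`, so this is the pull-out property
of conditional expectation. -/
theorem integral_mul_snd [IsFiniteMeasure μ] (hη : IsRegressionFunction μ η)
    (hY : ∀ᵐ p ∂μ, p.2 ∈ Icc (0 : ℝ) 1) {g : α → ℝ} (hg : Measurable g)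
    (hgi : Integrable (fun p => g p.1) μ) :
    ∫ p, g p.1 * p.2 ∂μ = ∫ p, g p.1 * η p.1 ∂μ := by
  have hm : MeasurableSpace.comap Prod.fst ‹_› ≤ Prod.instMeasurableSpace :=
    (measurable_fst (α := α) (β := ℝ)).comap_le
  have : SigmaFinite (μ.trim hm) := by
    have := isFiniteMeasure_trim (μ := μ) hm
    infer_instance
  have hfst : Measurable[MeasurableSpace.comap Prod.fst ‹_›] (Prod.fst : α × ℝ → α) :=
    comap_measurable _
  have hYbdd : ∀ᵐ p ∂μ, ‖p.2‖ ≤ 1 := hY.mono fun p hp => (abs_of_nonneg hp.1).trans_le hp.2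
  have hYi : Integrable (fun p : α × ℝ => p.2) μ :=
    Integrable.of_bound measurable_snd.aestronglyMeasurable 1 hYbdd
  have hηi : Integrable (fun p => η p.1) μ :=
    Integrable.of_bound (hη.1.comp measurable_fst).aestronglyMeasurable 1
      ((hη.ae_mem_Icc hY).mono fun p hp => (abs_of_nonneg hp.1).trans_le hp.2)
  have hcond :
      (fun p => η p.1) =ᵐ[μ] μ[fun p => p.2 | MeasurableSpace.comap Prod.fst ‹_›] := by
    refine ae_eq_condExp_of_forall_setIntegral_eq hm hYi (fun s _ _ => hηi.integrableOn) ?_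
      (hη.1.comp hfst).aestronglyMeasurable
    rintro _ ⟨A, hA, rfl⟩ _
    exact (hη.2 A hA).symm
  have hmul := condExp_mul_of_stronglyMeasurable_left (hg.comp hfst).stronglyMeasurable
    (hgi.mul_bdd measurable_snd.aestronglyMeasurable hYbdd) hYi
  calc ∫ p, g p.1 * p.2 ∂μ
      = ∫ p, μ[(fun p => g p.1) * fun p => p.2 | MeasurableSpace.comap Prod.fst ‹_›] p ∂μ :=
        (integral_condExp hm).symm
    _ = ∫ p, g p.1 * η p.1 ∂μ :=
        integral_congr_ae (hmul.trans (EventuallyEq.rfl.mul hcond.symm))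

theorem integrable_sq_sub [IsFiniteMeasure μ] (hη : IsRegressionFunction μ η)
    (hY : ∀ᵐ p ∂μ, p.2 ∈ Icc (0 : ℝ) 1) {β : α → ℝ} (hβ : Measurable β)
    (hβ01 : ∀ x, β x ∈ Icc (0 : ℝ) 1) : Integrable (fun p => (β p.1 - η p.1) ^ 2) μ :=
  Integrable.of_bound
    (((hβ.comp measurable_fst).sub (hη.1.comp measurable_fst)).pow_const 2).aestronglyMeasurable 1
    ((hη.ae_mem_Icc hY).mono fun p hp => norm_sq_sub_le_one (hβ01 p.1) hp)

theorem sqRisk_eq [IsProbabilityMeasure μ] (hη : IsRegressionFunction μ η)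
    (hY : ∀ᵐ p ∂μ, p.2 ∈ Icc (0 : ℝ) 1) {β : α → ℝ} (hβ : Measurable β)
    (hβ01 : ∀ x, β x ∈ Icc (0 : ℝ) 1) :
    sqRisk μ β = ∫ p, (β p.1 - η p.1) ^ 2 ∂μ + sqRisk μ η := by
  have hη01 := hη.ae_mem_Icc hY
  have hd : Integrable (fun p => β p.1 - η p.1) μ :=
    Integrable.of_bound
      ((hβ.comp measurable_fst).sub (hη.1.comp measurable_fst)).aestronglyMeasurable 1
      (hη01.mono fun p hp => abs_sub_le_of_nonneg_of_le (hβ01 p.1).1 (hβ01 p.1).2 hp.1 hp.2)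
  have hdY : Integrable (fun p => (β p.1 - η p.1) * p.2) μ :=
    hd.mul_bdd measurable_snd.aestronglyMeasurable
      (hY.mono fun p hp => (abs_of_nonneg hp.1).trans_le hp.2)
  have hdη : Integrable (fun p => (β p.1 - η p.1) * η p.1) μ :=
    hd.mul_bdd (hη.1.comp measurable_fst).aestronglyMeasurable
      (hη01.mono fun p hp => (abs_of_nonneg hp.1).trans_le hp.2)
  have hsq := hη.integrable_sq_sub hY hβ hβ01
  have hηY : Integrable (fun p : α × ℝ => (η p.1 - p.2) ^ 2) μ :=
    Integrable.of_bound
      (((hη.1.comp measurable_fst).sub measurable_snd).pow_const 2).aestronglyMeasurable 1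
      ((hη01.and hY).mono fun p hp => norm_sq_sub_le_one hp.1 hp.2)
  have hcross := hη.integral_mul_snd hY (hβ.sub hη.1) hd
  have hexpand : (fun p : α × ℝ => (β p.1 - p.2) ^ 2) = fun p => ((β p.1 - η p.1) ^ 2 +
      (η p.1 - p.2) ^ 2) + 2 * ((β p.1 - η p.1) * η p.1 - (β p.1 - η p.1) * p.2) := by
    ext p; ring
  rw [sqRisk, sqRisk, hexpand, integral_add, integral_add hsq hηY, integral_const_mul,
    integral_sub hdη hdY]
  · simp only [Pi.sub_apply] at hcross
    rw [hcross, sub_self, mul_zero, add_zero]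
  · exact hsq.add hηY
  · exact (hdη.sub hdY).const_mul 2

theorem iInf_sqRisk_eq [IsProbabilityMeasure μ] (hη : IsRegressionFunction μ η)
    (hY : ∀ᵐ p ∂μ, p.2 ∈ Icc (0 : ℝ) 1) {𝔅 : Set (α → ℝ)} [Nonempty 𝔅]
    (h𝔅meas : ∀ β ∈ 𝔅, Measurable β) (h𝔅01 : ∀ β ∈ 𝔅, ∀ x, β x ∈ Icc (0 : ℝ) 1)
    (happrox : ⨅ β : 𝔅, ∫ x, (β.1 x - η x) ^ 2 ∂(μ.map Prod.fst) = 0) :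
    ⨅ β : 𝔅, sqRisk μ β = sqRisk μ η := by
  have hbdd : BddBelow (range fun β : 𝔅 => ∫ x, (β.1 x - η x) ^ 2 ∂(μ.map Prod.fst)) :=
    ⟨0, by rintro _ ⟨β, rfl⟩; exact integral_nonneg fun _ => sq_nonneg _⟩
  calc ⨅ β : 𝔅, sqRisk μ β
      = ⨅ β : 𝔅, (∫ x, (β.1 x - η x) ^ 2 ∂(μ.map Prod.fst) + sqRisk μ η) :=
        iInf_congr fun β => by
          have hm : Measurable fun x => (β.1 x - η x) ^ 2 := ((h𝔅meas _ β.2).sub hη.1).pow_const 2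
          rw [hη.sqRisk_eq hY (h𝔅meas _ β.2) (h𝔅01 _ β.2),
            integral_map measurable_fst.aemeasurable hm.aestronglyMeasurable]
    _ = sqRisk μ η := by rw [← ciInf_add hbdd, happrox, zero_add]

variable [IsProbabilityMeasure μ]

theorem errorProb_plugInRule_le (hη : IsRegressionFunction μ η)
    (hY : ∀ᵐ p ∂μ, p.2 = 0 ∨ p.2 = 1) {g : α → ℝ} (hg : Measurable g)
    (hg01 : ∀ x, g x = 0 ∨ g x = 1) : errorProb μ (plugInRule η) ≤ errorProb μ g := by
  have hY' := ae_snd_mem_Icc hY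
  have hg01' : ∀ x, g x ∈ Icc (0 : ℝ) 1 := fun x => by rcases hg01 x with h | h <;> simp [h]
  have hstar := hη.1.plugInRule
  rw [errorProb_eq_sqRisk hY hstar (plugInRule_eq_zero_or_one η), errorProb_eq_sqRisk hY hg hg01,
    hη.sqRisk_eq hY' hstar (plugInRule_mem_Icc η), hη.sqRisk_eq hY' hg hg01']
  gcongr ?_ + _
  exact integral_mono (hη.integrable_sq_sub hY' hstar (plugInRule_mem_Icc η))
    (hη.integrable_sq_sub hY' hg hg01') fun p => sq_plugInRule_sub_self_le η p.1 (hg01 p.1)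

theorem iInf_errorProb_eq (hη : IsRegressionFunction μ η) (hY : ∀ᵐ p ∂μ, p.2 = 0 ∨ p.2 = 1) :
    ⨅ g : {g : α → ℝ // Measurable g ∧ ∀ x, g x = 0 ∨ g x = 1}, errorProb μ g =
      errorProb μ (plugInRule η) := by
  have hstar : Measurable (plugInRule η) ∧ ∀ x, plugInRule η x = 0 ∨ plugInRule η x = 1 :=
    ⟨hη.1.plugInRule, plugInRule_eq_zero_or_one η⟩
  have : Nonempty {g : α → ℝ // Measurable g ∧ ∀ x, g x = 0 ∨ g x = 1} := ⟨⟨_, hstar⟩⟩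
  have hbdd : BddBelow (range fun g : {g : α → ℝ // Measurable g ∧ ∀ x, g x = 0 ∨ g x = 1} =>
      errorProb μ g) := ⟨0, by rintro _ ⟨g, rfl⟩; exact ENNReal.toReal_nonneg⟩
  exact le_antisymm (ciInf_le hbdd ⟨_, hstar⟩)
    (le_ciInf fun g => hη.errorProb_plugInRule_le hY g.2.1 g.2.2)

theorem errorProb_plugInRule_sub_le (hη : IsRegressionFunction μ η)
    (hY : ∀ᵐ p ∂μ, p.2 = 0 ∨ p.2 = 1) {f : α → ℝ} (hf : Measurable f)
    (hf01 : ∀ x, f x ∈ Icc (0 : ℝ) 1) :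
    errorProb μ (plugInRule f) - errorProb μ (plugInRule η) ≤
      2 * √(∫ p, (f p.1 - η p.1) ^ 2 ∂μ) := by
  have hY' := ae_snd_mem_Icc hY
  have hd : MemLp (fun p => f p.1 - η p.1) 2 μ :=
    MemLp.of_bound ((hf.comp measurable_fst).sub (hη.1.comp measurable_fst)).aestronglyMeasurable
      1 ((hη.ae_mem_Icc hY').mono fun p hp =>
        abs_sub_le_of_nonneg_of_le (hf01 p.1).1 (hf01 p.1).2 hp.1 hp.2)
  have hgf := hη.integrable_sq_sub hY' hf.plugInRule (plugInRule_mem_Icc f)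
  have hstar := hη.integrable_sq_sub hY' hη.1.plugInRule (plugInRule_mem_Icc η)
  rw [errorProb_eq_sqRisk hY hf.plugInRule (plugInRule_eq_zero_or_one f),
    errorProb_eq_sqRisk hY hη.1.plugInRule (plugInRule_eq_zero_or_one η),
    hη.sqRisk_eq hY' hf.plugInRule (plugInRule_mem_Icc f),
    hη.sqRisk_eq hY' hη.1.plugInRule (plugInRule_mem_Icc η), add_sub_add_right_eq_sub,
    ← integral_sub hgf hstar]
  calc ∫ p, ((plugInRule f p.1 - η p.1) ^ 2 - (plugInRule η p.1 - η p.1) ^ 2) ∂μ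
      ≤ ∫ p, 2 * |f p.1 - η p.1| ∂μ :=
        integral_mono (hgf.sub hstar) ((hd.integrable one_le_two).abs.const_mul 2)
          fun p => sq_plugInRule_sub_sub_sq_plugInRule_sub_le f η p.1
    _ ≤ 2 * √(∫ p, (f p.1 - η p.1) ^ 2 ∂μ) := by
        rw [integral_const_mul]
        exact mul_le_mul_of_nonneg_left (integral_abs_le_sqrt_integral_sq hd) zero_le_two

theorem tendsto_errorProb_plugInRule (hη : IsRegressionFunction μ η)
    (hY : ∀ᵐ p ∂μ, p.2 = 0 ∨ p.2 = 1) {f : ℕ → α → ℝ} (hf : ∀ n, Measurable (f n))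
    (hf01 : ∀ n x, f n x ∈ Icc (0 : ℝ) 1)
    (hlim : Tendsto (fun n => sqRisk μ (f n)) atTop (𝓝 (sqRisk μ η))) :
    Tendsto (fun n => errorProb μ (plugInRule (f n))) atTop (𝓝 (errorProb μ (plugInRule η))) := by
  have hdist : Tendsto (fun n => ∫ p, (f n p.1 - η p.1) ^ 2 ∂μ) atTop (𝓝 0) := by
    simpa only [hη.sqRisk_eq (ae_snd_mem_Icc hY) (hf _) (hf01 _), add_sub_cancel_right,
      sub_self] using hlim.sub_const (sqRisk μ η)
  have hbound : Tendsto (fun n => 2 * √(∫ p, (f n p.1 - η p.1) ^ 2 ∂μ)) atTop (𝓝 0) := by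
    simpa using hdist.sqrt.const_mul 2
  rw [← tendsto_sub_nhds_zero_iff]
  exact squeeze_zero (fun n => sub_nonneg.2 (hη.errorProb_plugInRule_le hY (hf n).plugInRule
    (plugInRule_eq_zero_or_one _))) (fun n => hη.errorProb_plugInRule_sub_le hY (hf n) (hf01 n))
    hbound

end IsRegressionFunction

end

/-- Empirical squared error minimization over a totally bounded class `𝔅` of
functions `ℝ^d → [0,1]` is strongly consistent: the conditional squared risk of the
empirical minimizer converges a.s. to the infimum risk over `𝔅`, and, if the regression
function `η` can be approximated arbitrarily well in `L²` by members of `𝔅`, the plug-in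
classification rule `x ↦ 𝟙{β_n(x) > 1/2}` has conditional error probability converging
almost surely to the Bayes risk. -/
theorem empirical_squared_error_minimization_strongly_consistent
    {d : ℕ} {Ω : Type*} [MeasureSpace Ω] [IsProbabilityMeasure (ℙ : Measure Ω)]
    -- i.i.d. samples (X_i, Y_i) with common law μ on ℝ^d × ℝ, Y ∈ {0,1}
    (X : ℕ → Ω → (Fin d → ℝ)) (Y : ℕ → Ω → ℝ)
    (hmeas : ∀ n, Measurable fun ω => (X n ω, Y n ω))
    (hiid : iIndepFun (fun n ω => (X n ω, Y n ω)) ℙ)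
    (μ : Measure ((Fin d → ℝ) × ℝ))
    (hμ : ∀ n, Measure.map (fun ω => (X n ω, Y n ω)) ℙ = μ)
    (hY : ∀ n ω, Y n ω = 0 ∨ Y n ω = 1)
    -- the class 𝔅 of measurable functions ℝ^d → [0,1], totally bounded in sup norm
    (𝔅 : Set ((Fin d → ℝ) → ℝ))
    (h𝔅meas : ∀ β ∈ 𝔅, Measurable β)
    (h𝔅01 : ∀ β ∈ 𝔅, ∀ x, β x ∈ Set.Icc (0 : ℝ) 1)
    (h𝔅tb : ∀ ε > (0 : ℝ), ∃ F : Finset ((Fin d → ℝ) → ℝ), ↑F ⊆ 𝔅 ∧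
      ∀ β ∈ 𝔅, ∃ γ ∈ F, ∀ x, |β x - γ x| ≤ ε)
    -- β_n minimizes the empirical squared error over 𝔅
    (βn : ℕ → Ω → ((Fin d → ℝ) → ℝ))
    (hβn_mem : ∀ n ω, βn n ω ∈ 𝔅)
    (hβn_min : ∀ (n : ℕ) (ω : Ω), ∀ β ∈ 𝔅,
      (1 / (n : ℝ)) * ∑ i ∈ Finset.range n, (βn n ω (X i ω) - Y i ω) ^ 2 ≤
        (1 / (n : ℝ)) * ∑ i ∈ Finset.range n, (β (X i ω) - Y i ω) ^ 2)
    -- the regression function η(x) = E[Y | X = x]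
    (η : (Fin d → ℝ) → ℝ) (hη_meas : Measurable η)
    (hη : ∀ A : Set (Fin d → ℝ), MeasurableSet A →
      ∫ p in {p : (Fin d → ℝ) × ℝ | p.1 ∈ A}, p.2 ∂μ =
        ∫ p in {p : (Fin d → ℝ) × ℝ | p.1 ∈ A}, η p.1 ∂μ) :
    -- (1) a.s. convergence of the (conditional) squared risk to the infimum over 𝔅
    (∀ᵐ ω ∂ℙ, Tendsto (fun n => ∫ p, (βn n ω p.1 - p.2) ^ 2 ∂μ) atTop
      (nhds (⨅ β : 𝔅, ∫ p, (β.1 p.1 - p.2) ^ 2 ∂μ))) ∧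
    -- (2) if inf_{β ∈ 𝔅} E[(β(X) − η(X))²] = 0 then the plug-in rule is strongly consistent
    ((⨅ β : 𝔅, ∫ x, (β.1 x - η x) ^ 2 ∂(μ.map Prod.fst)) = 0 →
      ∀ᵐ ω ∂ℙ, Tendsto
        (fun n => (μ {p | (if 1 / 2 < βn n ω p.1 then (1 : ℝ) else 0) ≠ p.2}).toReal) atTop
        (nhds (⨅ g : {g : (Fin d → ℝ) → ℝ // Measurable g ∧ ∀ x, g x = 0 ∨ g x = 1},
          (μ {p | g.1 p.1 ≠ p.2}).toReal))) := by
  have : IsProbabilityMeasure μ := hμ 0 ▸ Measure.isProbabilityMeasure_map (hmeas 0).aemeasurable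
  have hY01 : ∀ᵐ p ∂μ, p.2 = 0 ∨ p.2 = 1 := ae_of_map_eq (hmeas 0) (hμ 0)
    ((measurable_snd (measurableSet_singleton 0)).union
      (measurable_snd (measurableSet_singleton 1))) (hY 0)
  have hrisk : ∀ᵐ ω ∂ℙ, Tendsto (fun n => sqRisk μ (βn n ω)) atTop
      (nhds (⨅ β : 𝔅, sqRisk μ β)) := by
    filter_upwards [ae_tendstoUniformlyOn_empiricalSqRisk hmeas hiid hμ
      (fun n ω => by rcases hY n ω with h | h <;> simp [h]) h𝔅meas h𝔅01 h𝔅tb] with ω hω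
    exact tendsto_iInf_of_tendstoUniformlyOn_of_isMinOn hω
      ⟨0, by rintro _ ⟨β, -, rfl⟩; exact integral_nonneg fun _ => sq_nonneg _⟩
      (hβn_mem · ω) fun n => isMinOn_iff.2 (hβn_min n ω)
  refine ⟨hrisk, fun happrox => ?_⟩
  have hreg : IsRegressionFunction μ η := ⟨hη_meas, hη⟩
  filter_upwards [hrisk] with ω hω
  have : Nonempty 𝔅 := ⟨⟨βn 0 ω, hβn_mem 0 ω⟩⟩
  rw [hreg.iInf_sqRisk_eq (ae_snd_mem_Icc hY01) h𝔅meas h𝔅01 happrox] at hω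
  exact (hreg.iInf_errorProb_eq hY01).symm ▸ hreg.tendsto_errorProb_plugInRule hY01
    (fun n => h𝔅meas _ (hβn_mem n ω)) (fun n => h𝔅01 _ (hβn_mem n ω)) hω
end

section
/- Let H_0 ∈ ℝ^{N_0 × L}, H_1 ∈ ℝ^{N_1 × L}, …, H_k ∈ ℝ^{N_k × L} be hidden layer matrices of sequentially arriving data blocks with corresponding target blocks T_0 ∈ ℝ^{N_0 × m}, …, T_k ∈ ℝ^{N_k × m}, and suppose K_0 := H_0ᵀH_0 is invertible. Define recursively β_0 = K_0^{-1} H_0ᵀ T_0, and for j = 1,…,k: K_j = K_{j-1} + H_jᵀ H_j and β_j = β_{j-1} + K_j^{-1} H_jᵀ (T_j − H_j β_{j-1}). Then each K_j is invertible, and β_k = (Σ_{i=0}^{k} H_iᵀ H_i)^{-1} (Σ_{i=0}^{k} H_iᵀ T_i); in particular, β_k is the unique minimizer over β ∈ ℝ^{L×m} of the cumulative squared error Σ_{i=0}^{k} ‖H_i β − T_i‖², i.e., the online sequential update computes exactly the batch least-squares solution over all data seen so far. -/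
/-!
By induction, `K_j` is the cumulative Gram matrix `Σ_{i ≤ j} H_iᵀ H_i` and each update preserves
the normal equations `K_j β_j = Σ_{i ≤ j} H_iᵀ T_i`; `K_j` is invertible since it is the positive
definite `K_0` plus positive semidefinite terms. Expanding the squared error at `β_k + d`, the
normal equations kill the cross term, and the remaining `Σ ‖H_i d‖²` vanishes only if
`(Σ H_iᵀ H_i) d = 0`, i.e. `d = 0`.
-/

open Matrix
/-- The squared Frobenius norm of a real matrix. -/
noncomputable def frobSq {n m : Type*} [Fintype n] [Fintype m] (M : Matrix n m ℝ) : ℝ :=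
  ∑ i, ∑ j, (M i j) ^ 2

open Finset

section FrobSq

variable {r n : Type*} [Fintype r] [Fintype n]

lemma frobSq_eq_trace (M : Matrix r n ℝ) : frobSq M = (Mᵀ * M).trace := by
  simp only [frobSq, trace, Matrix.diag, mul_apply, transpose_apply, sq]
  exact sum_comm

lemma frobSq_nonneg (M : Matrix r n ℝ) : 0 ≤ frobSq M := by
  rw [frobSq_eq_trace, ← conjTranspose_eq_transpose_of_trivial]
  exact (posSemidef_conjTranspose_mul_self M).trace_nonneg

lemma frobSq_eq_zero_iff {M : Matrix r n ℝ} : frobSq M = 0 ↔ M = 0 := by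
  rw [frobSq_eq_trace, ← conjTranspose_eq_transpose_of_trivial,
    trace_conjTranspose_mul_self_eq_zero_iff]

lemma frobSq_add (A B : Matrix r n ℝ) :
    frobSq (A + B) = frobSq A + 2 * (Bᵀ * A).trace + frobSq B := by
  have hcross : (Aᵀ * B).trace = (Bᵀ * A).trace := by
    rw [← trace_transpose, transpose_mul, transpose_transpose]
  simp only [frobSq_eq_trace, transpose_add, Matrix.add_mul, Matrix.mul_add, trace_add, hcross]
  ring

end FrobSq

section LeastSquares

variable {ι : Type*} {r : ι → Type*} [∀ i, Fintype (r i)] {l n : Type*} [Fintype l] [Fintype n]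
  (s : Finset ι) (H : ∀ i, Matrix (r i) l ℝ) (T : ∀ i, Matrix (r i) n ℝ)

lemma sum_frobSq_mul_add_sub (x d : Matrix l n ℝ) :
    ∑ i ∈ s, frobSq (H i * (x + d) - T i) =
      ∑ i ∈ s, frobSq (H i * x - T i) +
        2 * (dᵀ * ((∑ i ∈ s, (H i)ᵀ * H i) * x - ∑ i ∈ s, (H i)ᵀ * T i)).trace +
        ∑ i ∈ s, frobSq (H i * d) := by
  have hsplit : ∀ i, H i * (x + d) - T i = (H i * x - T i) + H i * d := fun i => by
    rw [Matrix.mul_add]; abel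
  have hnormal : (∑ i ∈ s, (H i)ᵀ * H i) * x - ∑ i ∈ s, (H i)ᵀ * T i =
      ∑ i ∈ s, (H i)ᵀ * (H i * x - T i) := by
    simp only [Matrix.sum_mul, Matrix.mul_sub, Matrix.mul_assoc, sum_sub_distrib]
  simp only [hsplit, frobSq_add, sum_add_distrib, hnormal, Matrix.mul_sum, trace_sum, mul_sum,
    transpose_mul, Matrix.mul_assoc]

lemma eq_zero_of_sum_frobSq_mul_eq_zero [DecidableEq l] (hG : IsUnit (∑ i ∈ s, (H i)ᵀ * H i))
    {d : Matrix l n ℝ} (h : ∑ i ∈ s, frobSq (H i * d) = 0) : d = 0 := by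
  have hHd : ∀ i ∈ s, H i * d = 0 := fun i hi =>
    frobSq_eq_zero_iff.mp ((sum_eq_zero_iff_of_nonneg fun i _ => frobSq_nonneg _).mp h i hi)
  have hGd : (∑ i ∈ s, (H i)ᵀ * H i) * d = 0 := by
    rw [Matrix.sum_mul]
    exact sum_eq_zero fun i hi => by rw [Matrix.mul_assoc, hHd i hi, Matrix.mul_zero]
  rw [← nonsing_inv_mul_cancel_left _ d ((isUnit_iff_isUnit_det _).mp hG), hGd, Matrix.mul_zero]

theorem sum_frobSq_lt_of_normal_eq [DecidableEq l] (hG : IsUnit (∑ i ∈ s, (H i)ᵀ * H i))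
    {x : Matrix l n ℝ} (hx : (∑ i ∈ s, (H i)ᵀ * H i) * x = ∑ i ∈ s, (H i)ᵀ * T i)
    {b : Matrix l n ℝ} (hb : b ≠ x) :
    ∑ i ∈ s, frobSq (H i * x - T i) < ∑ i ∈ s, frobSq (H i * b - T i) := by
  have hquad : 0 < ∑ i ∈ s, frobSq (H i * (b - x)) :=
    (sum_nonneg fun i _ => frobSq_nonneg _).lt_of_ne fun h =>
      hb (sub_eq_zero.mp (eq_zero_of_sum_frobSq_mul_eq_zero s H hG h.symm))
  rw [← add_sub_cancel x b, sum_frobSq_mul_add_sub, hx, sub_self, Matrix.mul_zero, trace_zero,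
    mul_zero, add_zero]
  exact lt_add_of_pos_right _ hquad

end LeastSquares

lemma eq_sum_range_of_succ_eq_add {M : Type*} [AddCommMonoid M] {k : ℕ} {f g : ℕ → M}
    (h0 : f 0 = g 0) (hsucc : ∀ j < k, f (j + 1) = f j + g (j + 1)) :
    ∀ j ≤ k, f j = ∑ i ∈ range (j + 1), g i := by
  intro j hj
  induction j with
  | zero => simpa using h0
  | succ j ih => rw [sum_range_succ, hsucc j hj, ih (by omega)]

lemma posDef_sum_range_succ_transpose_mul_self {r : ℕ → Type*} [∀ i, Fintype (r i)]
    {l : Type*} [Fintype l] [DecidableEq l] (H : ∀ i, Matrix (r i) l ℝ)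
    (h0 : IsUnit ((H 0)ᵀ * H 0)) (j : ℕ) :
    (∑ i ∈ range (j + 1), (H i)ᵀ * H i).PosDef := by
  have hpsd : ∀ i, ((H i)ᵀ * H i).PosSemidef := fun i => by
    rw [← conjTranspose_eq_transpose_of_trivial]
    exact posSemidef_conjTranspose_mul_self _
  rw [sum_range_succ']
  exact ((hpsd 0).posDef_iff_isUnit.mpr h0).posSemidef_add (posSemidef_sum _ fun i _ => hpsd _)

lemma recursiveLeastSquares_step_mul {R : Type*} [CommRing R] {l n r : Type*} [Fintype l]
    [DecidableEq l] [Fintype r] {K K' : Matrix l l R} (H : Matrix r l R) (T : Matrix r n R)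
    (β : Matrix l n R) (hK' : K' = K + Hᵀ * H) (hunit : IsUnit K') :
    K' * (β + K'⁻¹ * Hᵀ * (T - H * β)) = K * β + Hᵀ * T := by
  rw [Matrix.mul_add, Matrix.mul_assoc K'⁻¹,
    mul_nonsing_inv_cancel_left _ _ ((isUnit_iff_isUnit_det _).mp hunit), hK', Matrix.add_mul,
    Matrix.mul_sub, Matrix.mul_assoc]
  abel

/-- OS-ELM recursive least squares: the online sequential update
`K_j = K_{j-1} + H_jᵀ H_j`, `β_j = β_{j-1} + K_j⁻¹ H_jᵀ (T_j − H_j β_{j-1})`, started from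
an invertible `K_0 = H_0ᵀ H_0` and `β_0 = K_0⁻¹ H_0ᵀ T_0`, keeps every `K_j` invertible and
computes exactly the batch least-squares solution
`β_k = (Σ H_iᵀ H_i)⁻¹ (Σ H_iᵀ T_i)`, the unique minimizer of the cumulative squared
error `Σ_i ‖H_i β − T_i‖²`. -/
theorem oselm_sequential_equals_batch_least_squares
    {L m k : ℕ} {N : ℕ → ℕ}
    (H : ∀ i : ℕ, Matrix (Fin (N i)) (Fin L) ℝ)
    (T : ∀ i : ℕ, Matrix (Fin (N i)) (Fin m) ℝ)
    (K : ℕ → Matrix (Fin L) (Fin L) ℝ)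
    (β : ℕ → Matrix (Fin L) (Fin m) ℝ)
    (hK0 : K 0 = (H 0)ᵀ * H 0)
    (hK0_inv : IsUnit (K 0))
    (hβ0 : β 0 = (K 0)⁻¹ * (H 0)ᵀ * T 0)
    (hK : ∀ j < k, K (j + 1) = K j + (H (j + 1))ᵀ * H (j + 1))
    (hβ : ∀ j < k, β (j + 1) = β j + (K (j + 1))⁻¹ * (H (j + 1))ᵀ * (T (j + 1) - H (j + 1) * β j)) :
    (∀ j ≤ k, IsUnit (K j)) ∧
    β k = (∑ i ∈ Finset.range (k + 1), (H i)ᵀ * H i)⁻¹ *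
        ∑ i ∈ Finset.range (k + 1), (H i)ᵀ * T i ∧
    ∀ b : Matrix (Fin L) (Fin m) ℝ, b ≠ β k →
      ∑ i ∈ Finset.range (k + 1), frobSq (H i * β k - T i) <
        ∑ i ∈ Finset.range (k + 1), frobSq (H i * b - T i) := by
  have hKsum := eq_sum_range_of_succ_eq_add (g := fun i => (H i)ᵀ * H i) hK0 hK
  have hunit : ∀ j ≤ k, IsUnit (K j) := fun j hj => by
    rw [hKsum j hj]
    exact (posDef_sum_range_succ_transpose_mul_self H (hK0 ▸ hK0_inv) j).isUnit
  have hnormal : ∀ j ≤ k, K j * β j = ∑ i ∈ range (j + 1), (H i)ᵀ * T i := by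
    refine eq_sum_range_of_succ_eq_add (f := fun j => K j * β j) ?_ fun j hj => ?_
    · rw [hβ0, Matrix.mul_assoc,
        mul_nonsing_inv_cancel_left _ _ ((isUnit_iff_isUnit_det _).mp hK0_inv)]
    · rw [hβ j hj]
      exact recursiveLeastSquares_step_mul _ _ _ (hK j hj) (hunit (j + 1) hj)
  have hGram := hKsum k le_rfl
  refine ⟨hunit, ?_, fun b hb => ?_⟩
  · rw [← hGram, ← hnormal k le_rfl,
      nonsing_inv_mul_cancel_left _ _ ((isUnit_iff_isUnit_det _).mp (hunit k le_rfl))]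
  · exact sum_frobSq_lt_of_normal_eq _ H T (hGram ▸ hunit k le_rfl) (hGram ▸ hnormal k le_rfl) hb
end

section
/- Let g : ℝ → ℝ be an activation function, A ∈ ℝ^{d×L}, b ∈ ℝ^L, and ΔA ∈ ℝ^{δ×L}; let X ∈ ℝ^{N×d} with zero-padded version X' = [X 0] ∈ ℝ^{N×(d+δ)} and augmented input weights A' = [A; ΔA] ∈ ℝ^{(d+δ)×L}; let T ∈ ℝ^{N×m_1} with zero-padded target T' = [T 0] ∈ ℝ^{N×(m_1+m_2)}. Write H = H(X, A, b). If HᵀH is invertible and β̂ = (HᵀH)^{-1}HᵀT is the least-squares output weight of the original network, then [β̂ 0] ∈ ℝ^{L×(m_1+m_2)} is the unique minimizer over β' ∈ ℝ^{L×(m_1+m_2)} of ‖H(X', A', b)β' − T'‖; that is, simultaneous attribute augmentation (virtual drift) and class augmentation (real drift) — hybrid drift — is solved by the same output weights padded with zero columns, without retraining on the old data. -/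
/-!
Virtual drift is invisible to the hidden layer: the padded data `[X 0]` meets the new weight
rows `ΔA` only in the zero block, so `[X 0] [A; ΔA] = X A` and `H(X', A', b) = H`. Real drift
only pads the target, and `(HᵀH)⁻¹Hᵀ [T 0] = [β̂ 0]`. What remains is the classical fact that,
when `HᵀH` is invertible, `β̂ = (HᵀH)⁻¹HᵀT` is the unique least-squares solution: the residual
`Hβ̂ - T` is orthogonal to the column space of `H` (normal equations), so by Pythagoras
`‖Hβ - T‖² = ‖H(β - β̂)‖² + ‖Hβ̂ - T‖²`, and `H(β - β̂) ≠ 0` for `β ≠ β̂` since `H` is injective.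
-/

open Matrix

def hiddenH {N L : ℕ} {ι : Type*} [Fintype ι] (g : ℝ → ℝ)
    (X : Matrix (Fin N) ι ℝ) (A : Matrix ι (Fin L) ℝ) (b : Fin L → ℝ) :
    Matrix (Fin N) (Fin L) ℝ :=
  Matrix.of fun i j => g ((X * A) i j + b j)

section FrobSq

variable {m n : Type*} [Fintype m] [Fintype n]

theorem frobSq_eq_trace_transpose_mul (M : Matrix m n ℝ) : frobSq M = trace (Mᵀ * M) := by
  simp only [frobSq, trace, diag, mul_apply, transpose_apply, sq]
  exact Finset.sum_comm

theorem frobSq_pos {M : Matrix m n ℝ} (hM : M ≠ 0) : 0 < frobSq M := by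
  have hnonneg : 0 ≤ frobSq M :=
    Fintype.sum_nonneg fun _ => Fintype.sum_nonneg fun _ => sq_nonneg _
  refine hnonneg.lt_of_ne' ?_
  rwa [frobSq_eq_trace_transpose_mul, ← conjTranspose_eq_transpose_of_trivial, Ne,
    trace_conjTranspose_mul_self_eq_zero_iff]

theorem frobSq_add_of_transpose_mul_eq_zero {U V : Matrix m n ℝ} (h : Uᵀ * V = 0) :
    frobSq (U + V) = frobSq U + frobSq V := by
  have h' : Vᵀ * U = 0 := by
    rw [← transpose_transpose (Vᵀ * U), transpose_mul, transpose_transpose, h, transpose_zero]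
  simp only [frobSq_eq_trace_transpose_mul, transpose_add, Matrix.add_mul, Matrix.mul_add, h, h',
    add_zero, zero_add, trace_add]

end FrobSq

section LeastSquares

variable {N L m : Type*} [Fintype N] [Fintype L] [DecidableEq L] {H : Matrix N L ℝ}

theorem eq_zero_of_mul_eq_zero_of_isUnit_transpose_mul (hH : IsUnit (Hᵀ * H))
    {D : Matrix L m ℝ} (hD : H * D = 0) : D = 0 := by
  have hdet : IsUnit (Hᵀ * H).det := (isUnit_iff_isUnit_det _).mp hH
  calc D = (Hᵀ * H)⁻¹ * (Hᵀ * H) * D := by rw [nonsing_inv_mul _ hdet, Matrix.one_mul]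
    _ = (Hᵀ * H)⁻¹ * Hᵀ * (H * D) := by simp only [Matrix.mul_assoc]
    _ = 0 := by rw [hD, Matrix.mul_zero]

theorem transpose_mul_leastSquares_residual (hH : IsUnit (Hᵀ * H)) (T : Matrix N m ℝ) :
    Hᵀ * (H * ((Hᵀ * H)⁻¹ * Hᵀ * T) - T) = 0 := by
  have hdet : IsUnit (Hᵀ * H).det := (isUnit_iff_isUnit_det _).mp hH
  rw [Matrix.mul_sub, ← Matrix.mul_assoc, ← Matrix.mul_assoc, ← Matrix.mul_assoc,
    mul_nonsing_inv _ hdet, Matrix.one_mul, sub_self]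

variable [Fintype m]

theorem frobSq_leastSquares_residual_lt (hH : IsUnit (Hᵀ * H)) (T : Matrix N m ℝ)
    {β : Matrix L m ℝ} (hβ : β ≠ (Hᵀ * H)⁻¹ * Hᵀ * T) :
    frobSq (H * ((Hᵀ * H)⁻¹ * Hᵀ * T) - T) < frobSq (H * β - T) := by
  set β₀ := (Hᵀ * H)⁻¹ * Hᵀ * T
  have hgap : H * (β - β₀) ≠ 0 := fun h =>
    hβ (sub_eq_zero.mp (eq_zero_of_mul_eq_zero_of_isUnit_transpose_mul hH h))
  have hpythagoras : frobSq (H * β - T) = frobSq (H * (β - β₀)) + frobSq (H * β₀ - T) := by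
    rw [← frobSq_add_of_transpose_mul_eq_zero, Matrix.mul_sub, sub_add_sub_cancel]
    rw [transpose_mul, Matrix.mul_assoc, transpose_mul_leastSquares_residual hH, Matrix.mul_zero]
  linarith [frobSq_pos hgap]

end LeastSquares

theorem hiddenH_fromCols_zero_fromRows {N L : ℕ} {ι κ : Type*} [Fintype ι] [Fintype κ]
    (g : ℝ → ℝ) (X : Matrix (Fin N) ι ℝ) (A : Matrix ι (Fin L) ℝ) (ΔA : Matrix κ (Fin L) ℝ)
    (b : Fin L → ℝ) :
    hiddenH g (fromCols X 0) (fromRows A ΔA) b = hiddenH g X A b := by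
  rw [hiddenH, hiddenH, fromCols_mul_fromRows, Matrix.zero_mul, add_zero]

/-- Hybrid-drift handling in AOS-ELM: under simultaneous attribute augmentation
(virtual drift: `δ` new attributes handled by new input-weight rows `ΔA`, old data padded
with zeros) and class augmentation (real drift: `m₂` new classes handled by zero-padding
the targets), if `HᵀH` is invertible for `H = H(X, A, b)` then the old least-squares
output weights `β̂ = (HᵀH)⁻¹HᵀT`, padded with `m₂` zero columns, form the unique minimizer
of `‖H([X 0], [A; ΔA], b) β' − [T 0]‖` — no retraining on the old data is needed. -/
theorem hybrid_drift_zero_padding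
    {N d δ L m₁ m₂ : ℕ} (g : ℝ → ℝ)
    (A : Matrix (Fin d) (Fin L) ℝ) (b : Fin L → ℝ)
    (ΔA : Matrix (Fin δ) (Fin L) ℝ) (X : Matrix (Fin N) (Fin d) ℝ)
    (T : Matrix (Fin N) (Fin m₁) ℝ)
    (hinv : IsUnit ((hiddenH g X A b)ᵀ * hiddenH g X A b)) :
    ∀ β' : Matrix (Fin L) (Fin m₁ ⊕ Fin m₂) ℝ,
      β' ≠ Matrix.fromCols
          (((hiddenH g X A b)ᵀ * hiddenH g X A b)⁻¹ * (hiddenH g X A b)ᵀ * T)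
          (0 : Matrix (Fin L) (Fin m₂) ℝ) →
      frobSq (hiddenH g (Matrix.fromCols X (0 : Matrix (Fin N) (Fin δ) ℝ))
            (Matrix.fromRows A ΔA) b *
          Matrix.fromCols
            (((hiddenH g X A b)ᵀ * hiddenH g X A b)⁻¹ * (hiddenH g X A b)ᵀ * T)
            (0 : Matrix (Fin L) (Fin m₂) ℝ) -
          Matrix.fromCols T (0 : Matrix (Fin N) (Fin m₂) ℝ)) <
        frobSq (hiddenH g (Matrix.fromCols X (0 : Matrix (Fin N) (Fin δ) ℝ))
            (Matrix.fromRows A ΔA) b * β' -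
          Matrix.fromCols T (0 : Matrix (Fin N) (Fin m₂) ℝ)) := by
  intro β' hβ'
  rw [hiddenH_fromCols_zero_fromRows]
  have hpadded_solution := frobSq_leastSquares_residual_lt hinv
    (fromCols T (0 : Matrix (Fin N) (Fin m₂) ℝ)) (β := β')
    (by rwa [mul_fromCols, Matrix.mul_zero])
  rwa [mul_fromCols, Matrix.mul_zero] at hpadded_solution
end
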